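/- arXiv:2010.16130 — 3 statements merged into one kernel-verified Lean document; each statement's English description precedes it below -/
import Mathlib

section
/- Let b ∈ ℝ^N and suppose 𝒪_N(C,A)·b ≠ 0, i.e. C·A^j·b ≠ 0 for some j ∈ {0,…,N−1}. Then there exists δ ∈ (0,T) such that ∫_δ^T C·exp((T−s)A)·b ds ≠ 0. -/
/-!
If every integral `∫_δ^T y(T - s) ds`, `δ ∈ (0,T)`, of the output `y(t) = C exp(tA) b`
vanished, then differentiating in `δ` would make `y` vanish on `(0,T)`. Since `y` is real
analytic, it would vanish everywhere, and so would its derivatives `y⁽ʲ⁾(0) = C A^j b`,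
i.e. `𝒪_N(C,A) b = 0`.
-/

open Matrix

/-- The observability matrix `𝒪_N(C,A)`, the block-column stacking of `C A^j`,
`j = 0,…,N−1`, indexed so that the row `(j,p)` is the `p`-th row of `C A^j`. -/
def obsMat {N P : ℕ} (A : Matrix (Fin N) (Fin N) ℝ) (C : Matrix (Fin P) (Fin N) ℝ) :
    Matrix (Fin N × Fin P) (Fin N) ℝ :=
  Matrix.of fun jp i => (C * A ^ (jp.1 : ℕ)) jp.2 i

open NormedSpace Set Filter Topology

theorem eqOn_zero_of_forall_intervalIntegral_eq_zero {E : Type*} [NormedAddCommGroup E]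
    [NormedSpace ℝ E] [CompleteSpace E] {f : ℝ → E} (hf : Continuous f) {U : Set ℝ}
    (hU : IsOpen U) {b : ℝ} (h : ∀ δ ∈ U, ∫ s in δ..b, f s = 0) : EqOn f 0 U := by
  intro δ hδ
  have hderiv : HasDerivAt (fun u => ∫ s in u..b, f s) (-f δ) δ :=
    intervalIntegral.integral_hasDerivAt_left (hf.intervalIntegrable _ _)
      (hf.stronglyMeasurableAtFilter _ _) hf.continuousAt
  have hconst : (fun u => ∫ s in u..b, f s) =ᶠ[𝓝 δ] fun _ => 0 :=
    eventually_of_mem (hU.mem_nhds hδ) h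
  exact neg_eq_zero.mp (hderiv.unique ((hasDerivAt_const δ 0).congr_of_eventuallyEq hconst))

section BanachAlgebra

variable {𝕂 𝔸 E : Type*} [RCLike 𝕂] [NormedRing 𝔸] [NormedAlgebra 𝕂 𝔸] [CompleteSpace 𝔸]
  [NormedAddCommGroup E] [NormedSpace 𝕂 E]

theorem ContinuousLinearMap.analyticAt_comp_exp_smul (L : 𝔸 →L[𝕂] E) (a : 𝔸) (t : 𝕂) :
    AnalyticAt 𝕂 (fun u : 𝕂 => L (exp (u • a))) t :=
  (L.analyticAt _).comp ((exp_analytic _).comp (analyticAt_id.smul analyticAt_const))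

theorem ContinuousLinearMap.apply_exp_smul_eq_zero_of_eqOn (L : 𝔸 →L[𝕂] E) (a : 𝔸)
    {U : Set 𝕂} (hU : IsOpen U) {t₀ : 𝕂} (ht₀ : t₀ ∈ U)
    (h : EqOn (fun t => L (exp (t • a))) 0 U) (t : 𝕂) : L (exp (t • a)) = 0 :=
  AnalyticOnNhd.eqOn_zero_of_preconnected_of_eventuallyEq_zero
    (fun u _ => L.analyticAt_comp_exp_smul a u) isPreconnected_univ (mem_univ t₀)
    (eventually_of_mem (hU.mem_nhds ht₀) h) (mem_univ t)

theorem ContinuousLinearMap.apply_pow_eq_zero_of_apply_exp_smul_eq_zero (L : 𝔸 →L[𝕂] E)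
    (a : 𝔸) (h : ∀ t : 𝕂, L (exp (t • a)) = 0) (j : ℕ) : L (a ^ j) = 0 := by
  induction j generalizing L with
  | zero => simpa using h 0
  | succ j ih =>
    have hderiv (t : 𝕂) : L (exp (t • a) * a) = 0 := by
      have hL := L.hasFDerivAt.comp_hasDerivAt t (hasDerivAt_exp_smul_const a t)
      rw [show L ∘ (fun u : 𝕂 => exp (u • a)) = fun _ => 0 from funext h] at hL
      exact hL.unique (hasDerivAt_const t 0)
    rw [pow_succ]
    exact ih (L.comp ((ContinuousLinearMap.mul 𝕂 𝔸).flip a)) hderiv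

end BanachAlgebra

section Matrix

variable {m n 𝕂 : Type*} [RCLike 𝕂] [Fintype m] [Fintype n] [DecidableEq n]

attribute [local instance] Matrix.linftyOpNormedRing Matrix.linftyOpNormedAlgebra

noncomputable def Matrix.mulMulVecCLM (C : Matrix m n 𝕂) (b : n → 𝕂) :
    Matrix n n 𝕂 →L[𝕂] m → 𝕂 :=
  LinearMap.toContinuousLinearMap
    { toFun M := (C * M) *ᵥ b
      map_add' M M' := by rw [Matrix.mul_add, add_mulVec]
      map_smul' c M := by rw [Matrix.mul_smul, smul_mulVec, RingHom.id_apply] }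

theorem Matrix.continuous_mul_exp_smul_mulVec (C : Matrix m n 𝕂) (A : Matrix n n 𝕂)
    (b : n → 𝕂) : Continuous fun t : 𝕂 => (C * exp (t • A)) *ᵥ b :=
  continuous_iff_continuousAt.2 fun t =>
    ((mulMulVecCLM C b).analyticAt_comp_exp_smul A t).continuousAt

theorem Matrix.mul_pow_mulVec_eq_zero_of_eqOn (C : Matrix m n 𝕂) (A : Matrix n n 𝕂)
    (b : n → 𝕂) {U : Set 𝕂} (hU : IsOpen U) {t₀ : 𝕂} (ht₀ : t₀ ∈ U)
    (h : EqOn (fun t => (C * exp (t • A)) *ᵥ b) 0 U) (j : ℕ) : (C * A ^ j) *ᵥ b = 0 :=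
  (mulMulVecCLM C b).apply_pow_eq_zero_of_apply_exp_smul_eq_zero A
    ((mulMulVecCLM C b).apply_exp_smul_eq_zero_of_eqOn A hU ht₀ h) j

end Matrix

theorem obsMat_mulVec_eq_zero_iff {N P : ℕ} (A : Matrix (Fin N) (Fin N) ℝ)
    (C : Matrix (Fin P) (Fin N) ℝ) (b : Fin N → ℝ) :
    obsMat A C *ᵥ b = 0 ↔ ∀ j : Fin N, (C * A ^ (j : ℕ)) *ᵥ b = 0 := by
  simp only [funext_iff, Prod.forall, Pi.zero_apply]
  rfl

theorem exists_delta_integral_ne_zero_general {N P : ℕ}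
    (T : ℝ) (hT : 0 < T)
    (A : Matrix (Fin N) (Fin N) ℝ) (C : Matrix (Fin P) (Fin N) ℝ)
    (b : Fin N → ℝ) (hb : (obsMat A C).mulVec b ≠ 0) :
    ∃ δ ∈ Set.Ioo (0:ℝ) T,
      (∫ s in δ..T, (C * NormedSpace.exp ((T - s) • A)).mulVec b) ≠ 0 := by
  by_contra! hint
  set y : ℝ → Fin P → ℝ := fun t => (C * exp (t • A)) *ᵥ b
  have hy_reflected : EqOn (fun s => y (T - s)) 0 (Ioo 0 T) :=
    eqOn_zero_of_forall_intervalIntegral_eq_zero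
      ((continuous_mul_exp_smul_mulVec C A b).comp (continuous_const.sub continuous_id))
      isOpen_Ioo hint
  have hy_zero : EqOn y 0 (Ioo 0 T) := fun t ht => by
    simpa using hy_reflected ⟨sub_pos.2 ht.2, sub_lt_self T ht.1⟩
  exact hb <| (obsMat_mulVec_eq_zero_iff A C b).2 fun j =>
    mul_pow_mulVec_eq_zero_of_eqOn C A b isOpen_Ioo ⟨half_pos hT, half_lt_self hT⟩ hy_zero j

/-- if `𝒪_N(C,A) b ≠ 0` then there is `δ ∈ (0,T)` with
`∫_δ^T C e^{(T−s)A} b ds ≠ 0`. -/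
theorem exists_delta_integral_ne_zero {N P : ℕ} (hN : 0 < N) (hP : 0 < P)
    (T : ℝ) (hT : 0 < T)
    (A : Matrix (Fin N) (Fin N) ℝ) (C : Matrix (Fin P) (Fin N) ℝ)
    (b : Fin N → ℝ) (hb : (obsMat A C).mulVec b ≠ 0) :
    ∃ δ ∈ Set.Ioo (0:ℝ) T,
      (∫ s in δ..T, (C * NormedSpace.exp ((T - s) • A)).mulVec b) ≠ 0 :=
  exists_delta_integral_ne_zero_general T hT A C b hb
end

section
/- Let B̃ ∈ ℝ^{N×M} satisfy 𝒪_N(C,A)·B̃ ≠ 0. Then there exists a control ε ∈ L²((0,T);ℝ^M) with γ(B̃,ε) ≠ 0; moreover ε can be chosen of the form ε(s) = 0 for s ∈ [0,δ) and ε(s) = e_i for s ∈ [δ,T], for some δ ∈ (0,T) and some canonical basis vector e_i of ℝ^M. In particular, if rank 𝒪_N(C,A) = N, then every nonzero B̃ ∈ ℝ^{N×M} admits such a discriminating control. -/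
open MeasureTheory Matrix

/-- Observation integral `γ(B,ε) = ∫_0^T C e^{(T-s)A} B ε(s) ds`. -/
noncomputable def gam {N M P : ℕ} (T : ℝ) (A : Matrix (Fin N) (Fin N) ℝ)
    (C : Matrix (Fin P) (Fin N) ℝ) (B : Matrix (Fin N) (Fin M) ℝ)
    (ε : ℝ → Fin M → ℝ) : Fin P → ℝ :=
  ∫ s in (0:ℝ)..T, (C * NormedSpace.exp ((T - s) • A) * B).mulVec (ε s)

/-- The step control: `ε(s) = 0` for `s < δ` and `ε(s) = e_i` for `s ≥ δ`. -/
noncomputable def stepControl {M : ℕ} (δ : ℝ) (i : Fin M) : ℝ → Fin M → ℝ :=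
  fun s => if s < δ then 0 else Pi.single i 1

/-!
With the step control at `δ`, `γ` is the tail integral `∫_δ^T` of a column of the continuous
kernel `C e^{(T-s)A} B̃`. If all these vanish for `δ ∈ (0,T)`, the kernel vanishes on `(0,T)`,
i.e. `C e^{tA} B̃ = 0` there. Differentiating `k` times and letting `t → 0⁺` gives
`C A^k B̃ = 0` for all `k`, that is `𝒪_N(C,A) B̃ = 0`. When `𝒪_N(C,A)` has full column rank
it is left-cancellable, so `𝒪_N(C,A) B̃ ≠ 0` for every `B̃ ≠ 0`.
-/

open Set

theorem intervalIntegral_indicator_Ici {E : Type*} [NormedAddCommGroup E] [NormedSpace ℝ E]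
    (f : ℝ → E) {a b δ : ℝ} (haδ : a < δ) (hδb : δ ≤ b) :
    ∫ s in a..b, (Ici δ).indicator f s = ∫ s in δ..b, f s := by
  rw [intervalIntegral.integral_of_le (haδ.le.trans hδb), intervalIntegral.integral_of_le hδb,
    setIntegral_indicator measurableSet_Ici, ← integral_Icc_eq_integral_Ioc]
  congr 2
  ext s
  simp only [mem_inter_iff, mem_Ioc, mem_Ici, mem_Icc]
  grind

theorem eqOn_zero_of_intervalIntegral_eq_zero {E : Type*} [NormedAddCommGroup E]
    [NormedSpace ℝ E] [CompleteSpace E] {f : ℝ → E} (hf : Continuous f) {s : Set ℝ}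
    (hs : IsOpen s) {b : ℝ} (h : ∀ u ∈ s, ∫ x in u..b, f x = 0) : EqOn f 0 s := by
  intro u hu
  have hderiv : HasDerivAt (fun u => ∫ x in u..b, f x) (-f u) u :=
    intervalIntegral.integral_hasDerivAt_left (hf.intervalIntegrable _ _)
      hf.stronglyMeasurable.stronglyMeasurableAtFilter hf.continuousAt
  have hzero : HasDerivAt (fun u => ∫ x in u..b, f x) 0 u :=
    (hasDerivAt_const u 0).congr_of_eventuallyEq
      (Filter.eventuallyEq_of_mem (hs.mem_nhds hu) h)
  simpa using hderiv.unique hzero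

section NormedAlgebra

variable {𝔸 F : Type*} [NormedRing 𝔸] [NormedAlgebra ℝ 𝔸] [CompleteSpace 𝔸]
  [NormedAddCommGroup F] [NormedSpace ℝ F]

theorem ContinuousLinearMap.eqOn_zero_exp_smul_mul_pow (L : 𝔸 →L[ℝ] F) (a : 𝔸)
    {s : Set ℝ} (hs : IsOpen s) (h : EqOn (fun t : ℝ => L (NormedSpace.exp (t • a))) 0 s) (k : ℕ) :
    EqOn (fun t : ℝ => L (NormedSpace.exp (t • a) * a ^ k)) 0 s := by
  induction k generalizing L with
  | zero => simpa using h
  | succ k ih =>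
    -- the derivative of `t ↦ L (exp (t • a))` is `t ↦ L (exp (t • a) * a)`; recurse on `L (· * a)`
    have hderiv : EqOn (fun t : ℝ => L (NormedSpace.exp (t • a) * a)) 0 s := fun t ht =>
      (L.hasFDerivAt.comp_hasDerivAt t (hasDerivAt_exp_smul_const a t)).unique
        ((hasDerivAt_const t 0).congr_of_eventuallyEq
          (Filter.eventuallyEq_of_mem (hs.mem_nhds ht) h))
    simpa [pow_succ, mul_assoc] using ih (L.comp ((ContinuousLinearMap.mul ℝ 𝔸).flip a)) hderiv

theorem ContinuousLinearMap.map_pow_eq_zero_of_eqOn_exp_smul (L : 𝔸 →L[ℝ] F) (a : 𝔸)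
    {T : ℝ} (hT : 0 < T) (h : EqOn (fun t : ℝ => L (NormedSpace.exp (t • a))) 0 (Ioo 0 T)) (k : ℕ) :
    L (a ^ k) = 0 := by
  have hcont : Continuous fun t : ℝ => L (NormedSpace.exp (t • a) * a ^ k) :=
    continuous_iff_continuousAt.2 fun t => (L.hasFDerivAt.comp_hasDerivAt t
      ((hasDerivAt_exp_smul_const a t).mul_const _)).continuousAt
  have hzero := (L.eqOn_zero_exp_smul_mul_pow a isOpen_Ioo h k).closure hcont continuous_const
  rw [closure_Ioo hT.ne] at hzero
  simpa using hzero (left_mem_Icc.2 hT.le)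

end NormedAlgebra

theorem Matrix.eq_zero_of_mul_eq_zero_of_rank_eq_card {K l m n : Type*} [Field K] [Fintype m]
    {A : Matrix l m K} (hA : A.rank = Fintype.card m) {B : Matrix m n K} (h : A * B = 0) :
    B = 0 := by
  have hinj : Function.Injective A.mulVec := by
    rw [mulVec_injective_iff, linearIndependent_iff_card_eq_finrank_span, Set.finrank,
      ← rank_eq_finrank_span_cols, hA]
  refine ext_col fun j => hinj ?_
  ext x
  simpa [mulVec, dotProduct, mul_apply] using congrFun₂ h x j

theorem obsMat_mul_eq_zero {N M P : ℕ} {A : Matrix (Fin N) (Fin N) ℝ}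
    {C : Matrix (Fin P) (Fin N) ℝ} {B : Matrix (Fin N) (Fin M) ℝ}
    (h : ∀ k : ℕ, C * A ^ k * B = 0) : obsMat A C * B = 0 := by
  ext ⟨j, p⟩ i
  simpa [obsMat, mul_apply] using congrFun₂ (h j) p i

section ObservationIntegral

attribute [local instance] Matrix.linftyOpNormedAddCommGroup Matrix.linftyOpNormedRing
  Matrix.linftyOpNormedAlgebra Matrix.linftyOpNormedSpace

variable {N M P : ℕ} {T : ℝ} {A : Matrix (Fin N) (Fin N) ℝ} {C : Matrix (Fin P) (Fin N) ℝ}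
  {B : Matrix (Fin N) (Fin M) ℝ}

theorem gam_stepControl {δ : ℝ} (hδ : 0 < δ) (hδT : δ ≤ T) (i : Fin M) :
    gam T A C B (stepControl δ i) =
      ∫ s in δ..T, (C * NormedSpace.exp ((T - s) • A) * B).col i := by
  rw [gam, ← intervalIntegral_indicator_Ici _ hδ hδT]
  congr 1
  funext s
  by_cases hs : s < δ
  · simp [stepControl, hs]
  · simp [stepControl, hs, not_lt.1 hs]

theorem eqOn_zero_mul_exp_smul_mul
    (h : ∀ δ ∈ Ioo 0 T, ∀ i : Fin M, gam T A C B (stepControl δ i) = 0) :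
    EqOn (fun t : ℝ => C * NormedSpace.exp (t • A) * B) 0 (Ioo 0 T) := by
  intro t ht
  refine ext_col fun i => ?_
  have hmat : Continuous fun s : ℝ => C * NormedSpace.exp ((T - s) • A) * B := by fun_prop
  have hcont : Continuous fun s : ℝ => (C * NormedSpace.exp ((T - s) • A) * B).col i :=
    continuous_pi fun p => (continuous_apply_apply p i).comp hmat
  have := eqOn_zero_of_intervalIntegral_eq_zero hcont isOpen_Ioo
    (fun δ hδ => (gam_stepControl hδ.1 hδ.2.le i).symm.trans (h δ hδ i))
    (show T - t ∈ Ioo 0 T from ⟨by linarith [ht.2], by linarith [ht.1]⟩)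
  ext p
  simpa using congrFun this p

theorem exists_stepControl_gam_ne_zero (hT : 0 < T) (hB : obsMat A C * B ≠ 0) :
    ∃ δ ∈ Ioo 0 T, ∃ i : Fin M, gam T A C B (stepControl δ i) ≠ 0 := by
  contrapose! hB
  let L : Matrix (Fin N) (Fin N) ℝ →L[ℝ] Matrix (Fin P) (Fin M) ℝ :=
    ((mulLeftLinearMap (Fin M) ℝ C).comp (mulRightLinearMap (Fin N) ℝ B)).toContinuousLinearMap
  have hL : ∀ X, L X = C * X * B := fun X => (Matrix.mul_assoc C X B).symm
  have hexp : EqOn (fun t : ℝ => L (NormedSpace.exp (t • A))) 0 (Ioo 0 T) := fun t ht => by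
    simpa [hL] using eqOn_zero_mul_exp_smul_mul hB ht
  exact obsMat_mul_eq_zero fun k =>
    (hL _).symm.trans (L.map_pow_eq_zero_of_eqOn_exp_smul A hT hexp k)

end ObservationIntegral

theorem exists_discriminating_control_general {N M P : ℕ}
    (T : ℝ) (hT : 0 < T)
    (A : Matrix (Fin N) (Fin N) ℝ) (C : Matrix (Fin P) (Fin N) ℝ)
    (Bt : Matrix (Fin N) (Fin M) ℝ) (hBt : obsMat A C * Bt ≠ 0) :
    (∃ δ ∈ Set.Ioo (0:ℝ) T, ∃ i : Fin M, gam T A C Bt (stepControl δ i) ≠ 0) ∧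
      ((obsMat A C).rank = N →
        ∀ B' : Matrix (Fin N) (Fin M) ℝ, B' ≠ 0 →
          ∃ δ ∈ Set.Ioo (0:ℝ) T, ∃ i : Fin M, gam T A C B' (stepControl δ i) ≠ 0) := by
  refine ⟨exists_stepControl_gam_ne_zero hT hBt, fun hrank B' hB' => ?_⟩
  refine exists_stepControl_gam_ne_zero hT fun h => hB' ?_
  exact eq_zero_of_mul_eq_zero_of_rank_eq_card (by simpa using hrank) h

/-- if `𝒪_N(C,A) B̃ ≠ 0` then some step control (hence some `L²` control)
discriminates `B̃`, i.e. `γ(B̃,ε) ≠ 0`; in particular, if `rank 𝒪_N(C,A) = N`, every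
nonzero `B̃` admits such a discriminating control. -/
theorem exists_discriminating_control {N M P : ℕ} (hN : 0 < N) (hM : 0 < M) (hP : 0 < P)
    (T : ℝ) (hT : 0 < T)
    (A : Matrix (Fin N) (Fin N) ℝ) (C : Matrix (Fin P) (Fin N) ℝ)
    (Bt : Matrix (Fin N) (Fin M) ℝ) (hBt : obsMat A C * Bt ≠ 0) :
    (∃ δ ∈ Set.Ioo (0:ℝ) T, ∃ i : Fin M, gam T A C Bt (stepControl δ i) ≠ 0) ∧
      ((obsMat A C).rank = N →
        ∀ B' : Matrix (Fin N) (Fin M) ℝ, B' ≠ 0 →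
          ∃ δ ∈ Set.Ioo (0:ℝ) T, ∃ i : Fin M, gam T A C B' (stepControl δ i) ≠ 0) :=
  exists_discriminating_control_general T hT A C Bt hBt
end

section
/- Assume rank 𝒪_N(C,A) = N and let B_1,…,B_K ∈ ℝ^{N×M} be linearly independent (1 ≤ K ≤ MN). Then there exist controls ε^1,…,ε^K ∈ L²((0,T);ℝ^M) such that the matrix Ŵ := Σ_{m=1}^K W(ε^m) ∈ ℝ^{K×K} is positive definite; consequently, for any α⋆ ∈ ℝ^K, the vector α = α⋆ is the unique global minimizer of α ↦ Σ_{m=1}^K ‖C·φ_T(B(α⋆),ε^m) − C·φ_T(B(α),ε^m)‖₂². -/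
open MeasureTheory Matrix

/-- Final state `φ_T(B,ε) = e^{TA} φ₀ + ∫_0^T e^{(T-s)A} B ε(s) ds`. -/
noncomputable def phiT {N M : ℕ} (T : ℝ) (A : Matrix (Fin N) (Fin N) ℝ)
    (φ₀ : Fin N → ℝ) (B : Matrix (Fin N) (Fin M) ℝ) (ε : ℝ → Fin M → ℝ) : Fin N → ℝ :=
  (NormedSpace.exp (T • A)).mulVec φ₀ +
    ∫ s in (0:ℝ)..T, (NormedSpace.exp ((T - s) • A) * B).mulVec (ε s)

/-- The matrix `W(ε)` with entries `⟨γ(B_ℓ,ε), γ(B_j,ε)⟩`. -/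
noncomputable def Wmat {N M P K : ℕ} (T : ℝ) (A : Matrix (Fin N) (Fin N) ℝ)
    (C : Matrix (Fin P) (Fin N) ℝ) (Bs : Fin K → Matrix (Fin N) (Fin M) ℝ)
    (ε : ℝ → Fin M → ℝ) : Matrix (Fin K) (Fin K) ℝ :=
  Matrix.of fun ℓ j => gam T A C (Bs ℓ) ε ⬝ᵥ gam T A C (Bs j) ε

/-!
For a continuous control `ε` the map `B ↦ γ(B, ε)` is linear and `xᵀ W(ε) x = ‖γ(B(x), ε)‖²`.
If `γ(B, ε) = 0` for every continuous `ε`, testing with the entries of `C e^{(T-s)A} B` shows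
that `u ↦ C e^{uA} B` vanishes on `(0, T)`; differentiating gives `C Aʲ e^{uA} B = 0` for all `j`,
so full observability forces `e^{uA} B = 0`, i.e. `B = 0`. By linear independence the kernels of
`α ↦ γ(B(α), ε)` therefore intersect in `0`, and since they live in `ℝᴷ`, some `K` of them already
do. For these controls `Ŵ` is positive definite, and as
`C φ_T(B(α⋆), ε) - C φ_T(B(α), ε) = γ(B(α⋆ - α), ε)`, the loss at `α` is `(α⋆ - α)ᵀ Ŵ (α⋆ - α)`.
-/

open NormedSpace Set

section MatrixExponential

variable {n m k : Type*} [Fintype n] [DecidableEq n]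

open scoped Matrix.Norms.Operator in
theorem Matrix.continuous_exp_smul (A : Matrix n n ℝ) : Continuous fun u : ℝ => exp (u • A) :=
  continuous_iff_continuousAt.2 fun t => (hasDerivAt_exp_smul_const A t).continuousAt

theorem Matrix.continuous_mul_exp_smul_mul (T : ℝ) (A : Matrix n n ℝ) (C : Matrix m n ℝ)
    (B : Matrix n k ℝ) :
    Continuous fun s => C * exp ((T - s) • A) * B :=
  (continuous_const.matrix_mul ((Matrix.continuous_exp_smul A).comp
    (continuous_const.sub continuous_id))).matrix_mul continuous_const

open scoped Matrix.Norms.Operator in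
theorem Matrix.eqOn_mul_mul_exp_smul_mul_zero [Fintype m] [Fintype k] (A : Matrix n n ℝ)
    (Y : Matrix m n ℝ) (B : Matrix n k ℝ) {U : Set ℝ} (hU : IsOpen U)
    (h : EqOn (fun u : ℝ => Y * exp (u • A) * B) 0 U) :
    EqOn (fun u : ℝ => Y * A * exp (u • A) * B) 0 U := by
  intro u hu
  let L := ((mulRightLinearMap m ℝ B).comp (mulLeftLinearMap n ℝ Y)).toContinuousLinearMap
  have hderiv : HasDerivAt (fun u : ℝ => Y * exp (u • A) * B) (Y * (A * exp (u • A)) * B) u :=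
    L.hasFDerivAt.comp_hasDerivAt u (hasDerivAt_exp_smul_const' A u)
  have hzero : HasDerivAt (fun u : ℝ => Y * exp (u • A) * B) 0 u :=
    (hasDerivAt_const u 0).congr_of_eventuallyEq (Filter.eventuallyEq_of_mem (hU.mem_nhds hu) h)
  simpa only [Matrix.mul_assoc, Pi.zero_apply] using hderiv.unique hzero

theorem Matrix.eqOn_mul_pow_mul_exp_smul_mul_zero [Fintype m] [Fintype k] (A : Matrix n n ℝ)
    (Y : Matrix m n ℝ) (B : Matrix n k ℝ) {U : Set ℝ} (hU : IsOpen U)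
    (h : EqOn (fun u : ℝ => Y * exp (u • A) * B) 0 U) (j : ℕ) :
    EqOn (fun u : ℝ => Y * A ^ j * exp (u • A) * B) 0 U := by
  induction j with
  | zero => simpa using h
  | succ j ih =>
    simpa only [pow_succ, Matrix.mul_assoc] using
      Matrix.eqOn_mul_mul_exp_smul_mul_zero A (Y * A ^ j) B hU ih

end MatrixExponential

theorem Matrix.mulVec_injective_of_rank_eq_card {K m n : Type*} [Field K] [Fintype n]
    {M : Matrix m n K} (h : M.rank = Fintype.card n) : Function.Injective M.mulVec := by
  have hker : Module.finrank K (LinearMap.ker M.mulVecLin) = 0 := by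
    have := LinearMap.finrank_range_add_finrank_ker M.mulVecLin
    rw [← Matrix.rank, h, Module.finrank_fintype_fun_eq_card] at this
    omega
  rw [← Matrix.coe_mulVecLin, ← LinearMap.ker_eq_bot]
  exact Submodule.finrank_eq_zero.1 hker

theorem eq_zero_of_forall_mul_pow_mul_eq_zero {N P : ℕ} {m : Type*} {A : Matrix (Fin N) (Fin N) ℝ}
    {C : Matrix (Fin P) (Fin N) ℝ} (hrank : (obsMat A C).rank = N) {X : Matrix (Fin N) m ℝ}
    (h : ∀ j : ℕ, C * A ^ j * X = 0) : X = 0 := by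
  have hinj := Matrix.mulVec_injective_of_rank_eq_card (hrank.trans (Fintype.card_fin N).symm)
  ext i q
  have hcol : obsMat A C *ᵥ (fun i => X i q) = obsMat A C *ᵥ 0 := by
    ext ⟨j, p⟩
    simpa [obsMat, mulVec, dotProduct, Matrix.mul_apply] using congrFun (congrFun (h j) p) q
  exact congrFun (hinj hcol) i

theorem eqOn_zero_of_integral_sq_eq_zero {f : ℝ → ℝ} (hf : Continuous f) {a b : ℝ} (hab : a ≤ b)
    (h : ∫ x in a..b, f x ^ 2 = 0) : EqOn f 0 (Ioc a b) := by
  have hae := (intervalIntegral.integral_eq_zero_iff_of_le_of_nonneg_ae hab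
    (ae_of_all _ fun x => sq_nonneg (f x)) ((hf.pow 2).intervalIntegrable a b)).1 h
  intro x hx
  simpa using Measure.eqOn_Ioc_of_ae_eq volume hae (hf.pow 2).continuousOn continuousOn_const hx

theorem Submodule.exists_fin_iInf_eq_bot {K V ι : Type*} [Field K] [AddCommGroup V] [Module K V]
    [FiniteDimensional K V] [Nonempty ι] (p : ι → Submodule K V) (hp : ⨅ i, p i = ⊥) {r : ℕ}
    (hr : Module.finrank K V ≤ r) : ∃ f : Fin r → ι, ⨅ j, p (f j) = ⊥ := by
  suffices ∀ (n : ℕ) (S : Submodule K V), Module.finrank K S ≤ n →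
      ∃ f : Fin n → ι, S ⊓ ⨅ j, p (f j) = ⊥ by
    simpa using this r ⊤ (by rwa [finrank_top])
  intro n
  induction n with
  | zero =>
    intro S hS
    simp [Submodule.finrank_eq_zero.1 (Nat.le_zero.1 hS)]
  | succ n ih =>
    intro S hS
    by_cases hS₀ : S = ⊥
    · exact ⟨fun _ => Classical.arbitrary ι, by simp [hS₀]⟩
    obtain ⟨i, hi⟩ : ∃ i, ¬ S ≤ p i := by
      by_contra! hall
      exact hS₀ (eq_bot_iff.2 (hp ▸ le_iInf hall))
    have hlt : Module.finrank K ↥(S ⊓ p i) < Module.finrank K S :=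
      Submodule.finrank_lt_finrank_of_lt (inf_lt_left.2 hi)
    obtain ⟨f, hf⟩ := ih (S ⊓ p i) (by omega)
    refine ⟨Fin.cons i f, ?_⟩
    have hcons : ⨅ j, p ((Fin.cons i f : Fin (n + 1) → ι) j) = p i ⊓ ⨅ j, p (f j) :=
      le_antisymm (le_inf (iInf_le_of_le 0 le_rfl) (le_iInf fun j => iInf_le_of_le j.succ le_rfl))
        (le_iInf fun j => Fin.cases inf_le_left (fun j => inf_le_right.trans (iInf_le _ j)) j)
    rw [hcons, ← inf_assoc, hf]

theorem Continuous.memLp_restrict_Ioc {E : Type*} [NormedAddCommGroup E] {f : ℝ → E}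
    (hf : Continuous f) (p : ENNReal) (a b : ℝ) : MemLp f p (volume.restrict (Ioc a b)) := by
  obtain ⟨c, hc⟩ :=
    (isCompact_Icc : IsCompact (Icc a b)).exists_bound_of_continuousOn hf.continuousOn
  have hbound : MemLp f ⊤ (volume.restrict (Ioc a b)) :=
    memLp_top_of_bound hf.aestronglyMeasurable c <|
      (ae_restrict_mem measurableSet_Ioc).mono fun x hx => hc x (Ioc_subset_Icc_self hx)
  exact hbound.mono_exponent le_top

theorem eqOn_zero_of_forall_integral_mulVec_eq_zero {m k : Type*} [Fintype m] [Fintype k]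
    [DecidableEq k] {G : ℝ → Matrix m k ℝ} (hG : Continuous G) {a b : ℝ} (hab : a ≤ b)
    (h : ∀ ε : ℝ → k → ℝ, Continuous ε → ∫ s in a..b, G s *ᵥ ε s = 0) :
    EqOn G 0 (Ioc a b) := by
  intro s hs
  ext p q
  have hpq : Continuous fun s => G s p q := hG.matrix_elem p q
  have hε : Continuous fun s => G s p q • Pi.single q (1 : ℝ) := hpq.smul continuous_const
  -- testing with `ε = G_{pq} e_q` turns the `p`-th coordinate of the integral into `∫ G_{pq}²`
  have hint : ∫ s in a..b, G s p q ^ 2 = 0 := by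
    have h0 := congrFun (h _ hε) p
    rw [← ContinuousLinearMap.proj_apply (R := ℝ) p (∫ s in a..b, _),
      ← ContinuousLinearMap.intervalIntegral_comp_comm _
        ((hG.matrix_mulVec hε).intervalIntegrable a b)] at h0
    simpa [Matrix.mulVec_smul, sq] using h0
  exact eqOn_zero_of_integral_sq_eq_zero hpq hab hint hs

section Observation

variable {N M P K : ℕ} {T : ℝ} {A : Matrix (Fin N) (Fin N) ℝ} {C : Matrix (Fin P) (Fin N) ℝ}

noncomputable def gamLinearMap (T : ℝ) (A : Matrix (Fin N) (Fin N) ℝ)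
    (C : Matrix (Fin P) (Fin N) ℝ) {ε : ℝ → Fin M → ℝ} (hε : Continuous ε) :
    Matrix (Fin N) (Fin M) ℝ →ₗ[ℝ] Fin P → ℝ where
  toFun B := gam T A C B ε
  map_add' B₁ B₂ := by
    simp only [gam, Matrix.mul_add, Matrix.add_mulVec]
    exact intervalIntegral.integral_add
      (((Matrix.continuous_mul_exp_smul_mul T A C B₁).matrix_mulVec hε).intervalIntegrable 0 T)
      (((Matrix.continuous_mul_exp_smul_mul T A C B₂).matrix_mulVec hε).intervalIntegrable 0 T)
  map_smul' c B := by
    simp only [gam, Matrix.mul_smul, Matrix.smul_mulVec, RingHom.id_apply]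
    exact intervalIntegral.integral_smul c _

theorem gam_sum_smul (Bs : Fin K → Matrix (Fin N) (Fin M) ℝ) (x : Fin K → ℝ)
    {ε : ℝ → Fin M → ℝ} (hε : Continuous ε) :
    gam T A C (∑ j, x j • Bs j) ε = ∑ j, x j • gam T A C (Bs j) ε := by
  have h := map_sum (gamLinearMap T A C hε) (fun j => x j • Bs j) Finset.univ
  simp only [map_smul] at h
  exact h

theorem mulVec_phiT (φ₀ : Fin N → ℝ) (B : Matrix (Fin N) (Fin M) ℝ) {ε : ℝ → Fin M → ℝ}
    (hε : Continuous ε) :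
    C *ᵥ phiT T A φ₀ B ε = C *ᵥ (exp (T • A) *ᵥ φ₀) + gam T A C B ε := by
  have hint : IntervalIntegrable (fun s => (exp ((T - s) • A) * B) *ᵥ ε s) volume 0 T := by
    refine Continuous.intervalIntegrable ?_ 0 T
    exact (((Matrix.continuous_exp_smul A).comp (continuous_const.sub continuous_id)).matrix_mul
      continuous_const).matrix_mulVec hε
  have hcomm : C *ᵥ (∫ s in (0:ℝ)..T, (exp ((T - s) • A) * B) *ᵥ ε s) =
      ∫ s in (0:ℝ)..T, C *ᵥ ((exp ((T - s) • A) * B) *ᵥ ε s) :=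
    ((mulVecLin C).toContinuousLinearMap.intervalIntegral_comp_comm hint).symm
  simp only [phiT, gam, mulVec_add, hcomm, mulVec_mulVec, Matrix.mul_assoc]

theorem mulVec_phiT_sub_mulVec_phiT (φ₀ : Fin N → ℝ) (B₁ B₂ : Matrix (Fin N) (Fin M) ℝ)
    {ε : ℝ → Fin M → ℝ} (hε : Continuous ε) :
    C *ᵥ phiT T A φ₀ B₁ ε - C *ᵥ phiT T A φ₀ B₂ ε = gam T A C (B₁ - B₂) ε := by
  rw [mulVec_phiT φ₀ B₁ hε, mulVec_phiT φ₀ B₂ hε, add_sub_add_left_eq_sub]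
  exact (map_sub (gamLinearMap T A C hε) B₁ B₂).symm

theorem eq_zero_of_forall_gam_eq_zero (hT : 0 < T) (hrank : (obsMat A C).rank = N)
    {B : Matrix (Fin N) (Fin M) ℝ} (h : ∀ ε, Continuous ε → gam T A C B ε = 0) : B = 0 := by
  have hG : EqOn (fun s => C * exp ((T - s) • A) * B) 0 (Ioc 0 T) :=
    eqOn_zero_of_forall_integral_mulVec_eq_zero
      (Matrix.continuous_mul_exp_smul_mul T A C B) hT.le h
  have hU : EqOn (fun u => C * exp (u • A) * B) 0 (Ioo 0 T) := fun u hu => by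
    simpa using hG ⟨sub_pos.2 hu.2, sub_le_self T hu.1.le⟩
  have hX : exp ((T / 2) • A) * B = 0 := eq_zero_of_forall_mul_pow_mul_eq_zero hrank fun j => by
    simpa [Matrix.mul_assoc] using Matrix.eqOn_mul_pow_mul_exp_smul_mul_zero A C B isOpen_Ioo hU j
      ⟨half_pos hT, half_lt_self hT⟩
  have hdet : IsUnit (exp ((T / 2) • A)).det :=
    (Matrix.isUnit_iff_isUnit_det _).1 (Matrix.isUnit_exp _)
  rw [← nonsing_inv_mul_cancel_left (exp ((T / 2) • A)) B hdet, hX, Matrix.mul_zero]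

end Observation

section Gramian

variable {N M P K : ℕ} {T : ℝ} {A : Matrix (Fin N) (Fin N) ℝ} {C : Matrix (Fin P) (Fin N) ℝ}
  {Bs : Fin K → Matrix (Fin N) (Fin M) ℝ}

theorem Wmat_eq_transpose_mul_self (ε : ℝ → Fin M → ℝ) :
    Wmat T A C Bs ε =
      (of fun p j => gam T A C (Bs j) ε p)ᵀ * of fun p j => gam T A C (Bs j) ε p := by
  ext ℓ j
  simp [Wmat, Matrix.mul_apply, dotProduct]

theorem posSemidef_Wmat (ε : ℝ → Fin M → ℝ) : (Wmat T A C Bs ε).PosSemidef := by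
  rw [Wmat_eq_transpose_mul_self, ← conjTranspose_eq_transpose_of_trivial]
  exact posSemidef_conjTranspose_mul_self _

theorem dotProduct_Wmat_mulVec {ε : ℝ → Fin M → ℝ} (hε : Continuous ε) (x : Fin K → ℝ) :
    x ⬝ᵥ Wmat T A C Bs ε *ᵥ x =
      gam T A C (∑ j, x j • Bs j) ε ⬝ᵥ gam T A C (∑ j, x j • Bs j) ε := by
  have hG : (of fun p j => gam T A C (Bs j) ε p) *ᵥ x = gam T A C (∑ j, x j • Bs j) ε := by
    ext p
    simp [gam_sum_smul Bs x hε, mulVec, dotProduct, mul_comm]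
  rw [Wmat_eq_transpose_mul_self, ← mulVec_mulVec, dotProduct_mulVec, vecMul_transpose, hG]

theorem dotProduct_sum_Wmat_mulVec {ι : Type*} (s : Finset ι) {ε : ι → ℝ → Fin M → ℝ}
    (hε : ∀ m, Continuous (ε m)) (x : Fin K → ℝ) :
    x ⬝ᵥ (∑ m ∈ s, Wmat T A C Bs (ε m)) *ᵥ x =
      ∑ m ∈ s, gam T A C (∑ j, x j • Bs j) (ε m) ⬝ᵥ gam T A C (∑ j, x j • Bs j) (ε m) := by
  simp only [sum_mulVec, dotProduct_sum, dotProduct_Wmat_mulVec (hε _)]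

theorem posDef_sum_Wmat {ι : Type*} [Fintype ι] {ε : ι → ℝ → Fin M → ℝ}
    (hε : ∀ m, Continuous (ε m))
    (h : ∀ x : Fin K → ℝ, (∀ m, gam T A C (∑ j, x j • Bs j) (ε m) = 0) → x = 0) :
    (∑ m, Wmat T A C Bs (ε m)).PosDef := by
  refine .of_dotProduct_mulVec_pos (posSemidef_sum _ fun m _ => posSemidef_Wmat _).isHermitian
    fun x hx => ?_
  obtain ⟨m, hm⟩ : ∃ m, gam T A C (∑ j, x j • Bs j) (ε m) ≠ 0 := by
    by_contra! hall
    exact hx (h x hall)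
  rw [star_trivial, dotProduct_sum_Wmat_mulVec _ hε]
  refine Finset.sum_pos' (fun m _ => ?_) ⟨m, Finset.mem_univ m, ?_⟩
  · simpa only [star_trivial] using dotProduct_star_self_nonneg (gam T A C (∑ j, x j • Bs j) (ε m))
  · simpa only [star_trivial] using dotProduct_star_self_pos_iff.2 hm

end Gramian

theorem exists_continuous_controls_separating {N M P K : ℕ} {T : ℝ} (hT : 0 < T)
    {A : Matrix (Fin N) (Fin N) ℝ} {C : Matrix (Fin P) (Fin N) ℝ}
    (hrank : (obsMat A C).rank = N) {Bs : Fin K → Matrix (Fin N) (Fin M) ℝ}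
    (hli : LinearIndependent ℝ Bs) :
    ∃ ε : Fin K → ℝ → Fin M → ℝ, (∀ m, Continuous (ε m)) ∧
      ∀ x : Fin K → ℝ, (∀ m, gam T A C (∑ j, x j • Bs j) (ε m) = 0) → x = 0 := by
  let kerOf (ε : {ε : ℝ → Fin M → ℝ // Continuous ε}) : Submodule ℝ (Fin K → ℝ) :=
    LinearMap.ker ((gamLinearMap T A C ε.2).comp (Fintype.linearCombination ℝ Bs))
  have hmem : ∀ ε x, x ∈ kerOf ε ↔ gam T A C (∑ j, x j • Bs j) ε.1 = 0 := fun _ _ => Iff.rfl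
  have : Nonempty {ε : ℝ → Fin M → ℝ // Continuous ε} := ⟨⟨0, continuous_const⟩⟩
  have hker : ⨅ ε, kerOf ε = ⊥ := by
    refine eq_bot_iff.2 fun x hx => ?_
    have hB : ∑ j, x j • Bs j = 0 := eq_zero_of_forall_gam_eq_zero hT hrank fun ε hε =>
      (hmem _ x).1 (Submodule.mem_iInf _ |>.1 hx ⟨ε, hε⟩)
    exact funext (Fintype.linearIndependent_iff.1 hli x hB)
  obtain ⟨f, hf⟩ := Submodule.exists_fin_iInf_eq_bot kerOf hker (Module.finrank_fin_fun ℝ).le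
  refine ⟨fun m => (f m).1, fun m => (f m).2, fun x hx => ?_⟩
  exact (Submodule.mem_bot ℝ).1 (hf ▸ Submodule.mem_iInf _ |>.2 fun m => (hmem _ x).2 (hx m))

theorem GR_convergence_fully_observable_general {N M P K : ℕ}
    (T : ℝ) (hT : 0 < T)
    (A : Matrix (Fin N) (Fin N) ℝ) (C : Matrix (Fin P) (Fin N) ℝ)
    (φ₀ : Fin N → ℝ)
    (hrank : (obsMat A C).rank = N)
    (Bs : Fin K → Matrix (Fin N) (Fin M) ℝ)
    (hli : LinearIndependent ℝ Bs) :
    ∃ ε : Fin K → ℝ → Fin M → ℝ,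
      (∀ m, MemLp (ε m) 2 (volume.restrict (Set.Ioc (0:ℝ) T))) ∧
      (∑ m : Fin K, Wmat T A C Bs (ε m)).PosDef ∧
      ∀ αstar α : Fin K → ℝ, α ≠ αstar →
        0 < ∑ m : Fin K,
          (C.mulVec (phiT T A φ₀ (∑ j, αstar j • Bs j) (ε m)) -
              C.mulVec (phiT T A φ₀ (∑ j, α j • Bs j) (ε m))) ⬝ᵥ
            (C.mulVec (phiT T A φ₀ (∑ j, αstar j • Bs j) (ε m)) -
              C.mulVec (phiT T A φ₀ (∑ j, α j • Bs j) (ε m))) := by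
  obtain ⟨ε, hε, hsep⟩ := exists_continuous_controls_separating hT hrank hli
  have hW := posDef_sum_Wmat hε hsep
  refine ⟨ε, fun m => (hε m).memLp_restrict_Ioc 2 0 T, hW, fun αstar α hne => ?_⟩
  have hδ : ∑ j, αstar j • Bs j - ∑ j, α j • Bs j = ∑ j, (αstar - α) j • Bs j := by
    simp only [Pi.sub_apply, sub_smul, Finset.sum_sub_distrib]
  simpa only [mulVec_phiT_sub_mulVec_phiT φ₀ _ _ (hε _), hδ, star_trivial,
    dotProduct_sum_Wmat_mulVec _ hε] using hW.dotProduct_mulVec_pos (sub_ne_zero.2 hne.symm)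

/-- for a fully observable system and linearly independent `B_1,…,B_K`
(`1 ≤ K ≤ MN`), there exist `L²` controls `ε^1,…,ε^K` making `Ŵ = Σ_m W(ε^m)` positive
definite; consequently, for any `α⋆`, the online least-squares problem is uniquely
minimized at `α = α⋆`. -/
theorem GR_convergence_fully_observable {N M P K : ℕ}
    (hN : 0 < N) (hM : 0 < M) (hP : 0 < P) (hK : 0 < K) (hKMN : K ≤ M * N)
    (T : ℝ) (hT : 0 < T)
    (A : Matrix (Fin N) (Fin N) ℝ) (C : Matrix (Fin P) (Fin N) ℝ)
    (φ₀ : Fin N → ℝ)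
    (hrank : (obsMat A C).rank = N)
    (Bs : Fin K → Matrix (Fin N) (Fin M) ℝ)
    (hli : LinearIndependent ℝ Bs) :
    ∃ ε : Fin K → ℝ → Fin M → ℝ,
      (∀ m, MemLp (ε m) 2 (volume.restrict (Set.Ioc (0:ℝ) T))) ∧
      (∑ m : Fin K, Wmat T A C Bs (ε m)).PosDef ∧
      ∀ αstar α : Fin K → ℝ, α ≠ αstar →
        0 < ∑ m : Fin K,
          (C.mulVec (phiT T A φ₀ (∑ j, αstar j • Bs j) (ε m)) -
              C.mulVec (phiT T A φ₀ (∑ j, α j • Bs j) (ε m))) ⬝ᵥ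
            (C.mulVec (phiT T A φ₀ (∑ j, αstar j • Bs j) (ε m)) -
              C.mulVec (phiT T A φ₀ (∑ j, α j • Bs j) (ε m))) :=
  GR_convergence_fully_observable_general T hT A C φ₀ hrank Bs hli
end
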